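/- arXiv:0801.0217 — 3 statements merged into one kernel-verified Lean document; each statement's English description precedes it below -/
import Mathlib

section
/- Let d, w_1, w_2, w_3 be positive integers such that gcd(w_i, w_j) divides d for all pairs i ≠ j. Then lcm(d/gcd(d,w_1), d/gcd(d,w_2), d/gcd(d,w_3)) = d/gcd(w_1, w_2, w_3). -/
theorem Nat.lcm_div_gcd_div_gcd (d a b : ℕ) :
    Nat.lcm (d / Nat.gcd d a) (d / Nat.gcd d b) = d / Nat.gcd d (Nat.gcd a b) := by
  rw [Nat.div_lcm_eq_div_gcd (Nat.gcd_dvd_left d a) (Nat.gcd_dvd_left d b),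
    show Nat.gcd (Nat.gcd d a) (Nat.gcd d b) = Nat.gcd d (Nat.gcd a b) by ac_rfl]

theorem lcm_three_div_gcd_eq_div_gcd_general (d w1 w2 w3 : ℕ)
    (h12 : Nat.gcd w1 w2 ∣ d) :
    Nat.lcm (Nat.lcm (d / Nat.gcd d w1) (d / Nat.gcd d w2)) (d / Nat.gcd d w3)
      = d / Nat.gcd (Nat.gcd w1 w2) w3 := by
  rw [Nat.lcm_div_gcd_div_gcd, Nat.lcm_div_gcd_div_gcd,
    Nat.gcd_eq_right ((Nat.gcd_dvd_left _ _).trans h12)]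

theorem lcm_three_div_gcd_eq_div_gcd (d w1 w2 w3 : ℕ) (hd : 0 < d)
    (hw1 : 0 < w1) (hw2 : 0 < w2) (hw3 : 0 < w3)
    (h12 : Nat.gcd w1 w2 ∣ d) (h13 : Nat.gcd w1 w3 ∣ d) (h23 : Nat.gcd w2 w3 ∣ d) :
    Nat.lcm (Nat.lcm (d / Nat.gcd d w1) (d / Nat.gcd d w2)) (d / Nat.gcd d w3)
      = d / Nat.gcd (Nat.gcd w1 w2) w3 :=
  lcm_three_div_gcd_eq_div_gcd_general d w1 w2 w3 h12
end

section
/- Let d, w_1, w_2, w_3 be positive integers with gcd(w_i, w_j) dividing d for all i < j, and set u_i = d/gcd(d,w_i), v_i = w_i/gcd(d,w_i). Then (u_1*u_2*u_3)/(v_1*v_2*v_3*lcm(u_1,u_2,u_3)) = d^2 * gcd(w_1,w_2,w_3)/(w_1*w_2*w_3); equivalently u_1*u_2*u_3*w_1*w_2*w_3 = d^2*gcd(w_1,w_2,w_3)*v_1*v_2*v_3*lcm(u_1,u_2,u_3). -/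
/-!
Since `u_i / v_i = d / w_i` in `ℚ`, both identities reduce to
`lcm(u₁, u₂, u₃) = d / gcd(w₁, w₂, w₃)`. Writing `g_i = gcd(d, w_i)`, the lcm of the codivisors
`d / g_i` is `d / gcd(g₁, g₂, g₃) = d / gcd(d, w₁, w₂, w₃)`, and the last gcd is `gcd(w₁, w₂, w₃)`
because it divides `gcd(w₁, w₂)`, which divides `d`.
-/

namespace Nat

lemma div_mul_comm_of_dvd {a b c : ℕ} (ha : c ∣ a) (hb : c ∣ b) : a / c * b = a * (b / c) := by
  rw [Nat.div_mul_right_comm ha, Nat.mul_div_assoc a hb]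

lemma gcd_gcd_gcd_self_left (d a b : ℕ) : gcd (gcd d a) (gcd d b) = gcd d (gcd a b) := by
  rw [Nat.gcd_assoc, Nat.gcd_left_comm a, ← Nat.gcd_assoc d d, Nat.gcd_self]

lemma lcm_lcm_div_gcd (d a b c : ℕ) :
    ((d / gcd d a).lcm (d / gcd d b)).lcm (d / gcd d c) = d / gcd d (gcd (gcd a b) c) := by
  rw [div_lcm_eq_div_gcd (gcd_dvd_left d a) (gcd_dvd_left d b), gcd_gcd_gcd_self_left,
    div_lcm_eq_div_gcd (gcd_dvd_left d _) (gcd_dvd_left d c), gcd_gcd_gcd_self_left]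

end Nat

theorem triple_fractional_weight_identity_general (d w1 w2 w3 : ℕ)
    (h12 : Nat.gcd w1 w2 ∣ d)
    (u1 u2 u3 v1 v2 v3 : ℕ)
    (hu1 : u1 = d / Nat.gcd d w1) (hu2 : u2 = d / Nat.gcd d w2) (hu3 : u3 = d / Nat.gcd d w3)
    (hv1 : v1 = w1 / Nat.gcd d w1) (hv2 : v2 = w2 / Nat.gcd d w2) (hv3 : v3 = w3 / Nat.gcd d w3) :
    ((u1 : ℚ) * u2 * u3) / ((v1 : ℚ) * v2 * v3 * Nat.lcm (Nat.lcm u1 u2) u3)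
      = (d : ℚ) ^ 2 * Nat.gcd (Nat.gcd w1 w2) w3 / ((w1 : ℚ) * w2 * w3) ∧
    u1 * u2 * u3 * (w1 * w2 * w3)
      = d ^ 2 * Nat.gcd (Nat.gcd w1 w2) w3 * (v1 * v2 * v3) * Nat.lcm (Nat.lcm u1 u2) u3 := by
  set G := Nat.gcd (Nat.gcd w1 w2) w3
  have hG : G ∣ d := (Nat.gcd_dvd_left _ _).trans h12
  have hL : Nat.lcm (Nat.lcm u1 u2) u3 = d / G := by
    rw [hu1, hu2, hu3, Nat.lcm_lcm_div_gcd, Nat.gcd_eq_right hG]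
  have hratio {u v w : ℕ} (hu : u = d / d.gcd w) (hv : v = w / d.gcd w) :
      (u : ℚ) / v = d / w :=
    hu ▸ hv ▸ Nat.cast_div_div_div_cancel_right (Nat.gcd_dvd_right d w) (Nat.gcd_dvd_left d w)
  have hcross {u v w : ℕ} (hu : u = d / d.gcd w) (hv : v = w / d.gcd w) : u * w = d * v :=
    hu ▸ hv ▸ Nat.div_mul_comm_of_dvd (Nat.gcd_dvd_left d w) (Nat.gcd_dvd_right d w)
  constructor
  · calc _ = (u1 : ℚ) / v1 * (u2 / v2) * (u3 / v3) / Nat.lcm (Nat.lcm u1 u2) u3 := by ring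
      _ = d / w1 * (d / w2) * (d / w3) / (d / G) := by
        rw [hratio hu1 hv1, hratio hu2 hv2, hratio hu3 hv3, hL, Nat.cast_div_charZero hG]
      _ = _ := by
        rcases eq_or_ne (d : ℚ) 0 with hd | hd
        · simp [hd]
        · field_simp
  · calc _ = (u1 * w1) * (u2 * w2) * (u3 * w3) := by ring
      _ = d ^ 2 * (d / G * G) * (v1 * v2 * v3) := by
        rw [hcross hu1 hv1, hcross hu2 hv2, hcross hu3 hv3, Nat.div_mul_cancel hG]; ring
      _ = _ := by rw [hL]; ring

theorem triple_fractional_weight_identity (d w1 w2 w3 : ℕ) (hd : 0 < d)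
    (hw1 : 0 < w1) (hw2 : 0 < w2) (hw3 : 0 < w3)
    (h12 : Nat.gcd w1 w2 ∣ d) (h13 : Nat.gcd w1 w3 ∣ d) (h23 : Nat.gcd w2 w3 ∣ d)
    (u1 u2 u3 v1 v2 v3 : ℕ)
    (hu1 : u1 = d / Nat.gcd d w1) (hu2 : u2 = d / Nat.gcd d w2) (hu3 : u3 = d / Nat.gcd d w3)
    (hv1 : v1 = w1 / Nat.gcd d w1) (hv2 : v2 = w2 / Nat.gcd d w2) (hv3 : v3 = w3 / Nat.gcd d w3) :
    ((u1 : ℚ) * u2 * u3) / ((v1 : ℚ) * v2 * v3 * Nat.lcm (Nat.lcm u1 u2) u3)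
      = (d : ℚ) ^ 2 * Nat.gcd (Nat.gcd w1 w2) w3 / ((w1 : ℚ) * w2 * w3) ∧
    u1 * u2 * u3 * (w1 * w2 * w3)
      = d ^ 2 * Nat.gcd (Nat.gcd w1 w2) w3 * (v1 * v2 * v3) * Nat.lcm (Nat.lcm u1 u2) u3 :=
  triple_fractional_weight_identity_general d w1 w2 w3 h12 u1 u2 u3 v1 v2 v3 hu1 hu2 hu3 hv1 hv2 hv3
end

section
/- Let u_0, u_1, u_2, u_3 be positive integers. Define m_0 = (u_0 * gcd(u_0,u_1,u_2) * gcd(u_0,u_2,u_3) * gcd(u_0,u_1,u_3)) / (gcd(u_0,u_1,u_2,u_3) * gcd(u_0,u_1) * gcd(u_0,u_2) * gcd(u_0,u_3)). Then m_0 is a positive integer (i.e. the denominator divides the numerator). -/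
/-!
Write `B = gcd(u₀,u₁)`, `C = gcd(u₀,u₂)`, `D = gcd(u₀,u₃)`; these divide `u₀`, and every gcd in the
formula is a gcd of some of `B, C, D`. Prime by prime, `max = Σ - Σ pairwise min + triple min`
gives `x y z gcd(x,y,z) = lcm(x,y,z) gcd(x,y) gcd(y,z) gcd(x,z)`, so `m₀ = u₀ / lcm(B,C,D)`,
an integer because `B, C, D ∣ u₀`.
-/
namespace Nat

theorem gcd_mul_gcd_mul_gcd_mul_lcm (x y z : ℕ) :
    gcd x y * gcd y z * gcd x z * lcm (lcm x y) z = x * y * z * gcd (gcd x y) z := by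
  rcases eq_or_ne x 0 with rfl | hx
  · simp
  rcases eq_or_ne y 0 with rfl | hy
  · simp
  rcases eq_or_ne z 0 with rfl | hz
  · simp
  refine eq_of_factorization_eq (by positivity) (by positivity) fun p => ?_
  simp only [ne_eq, _root_.mul_eq_zero, gcd_eq_zero_iff, lcm_eq_zero_iff, hx, hy, hz, and_self,
    or_self, not_false_eq_true, factorization_mul, factorization_gcd, factorization_lcm,
    Finsupp.coe_add, Pi.add_apply, Finsupp.inf_apply, Finsupp.sup_apply]
  omega

theorem mul_mul_mul_gcd_dvd_of_dvd {a x y z : ℕ} (hx : x ∣ a) (hy : y ∣ a) (hz : z ∣ a) :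
    x * y * z * gcd (gcd x y) z ∣ a * gcd x y * gcd y z * gcd x z := by
  rw [← gcd_mul_gcd_mul_gcd_mul_lcm, mul_comm, mul_assoc a, mul_assoc a]
  simpa only [mul_assoc] using mul_dvd_mul_right (lcm_dvd (lcm_dvd hx hy) hz) _

theorem gcd_gcd_of_dvd {g a : ℕ} (h : g ∣ a) (c : ℕ) : gcd g (gcd a c) = gcd g c := by
  rw [← gcd_assoc, gcd_eq_left h]

end Nat

theorem orlik_m0_integral_general (u0 u1 u2 u3 : ℕ)
    (h0 : 0 < u0) :
    (Nat.gcd (Nat.gcd (Nat.gcd u0 u1) u2) u3 * Nat.gcd u0 u1 * Nat.gcd u0 u2 * Nat.gcd u0 u3)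
      ∣ (u0 * Nat.gcd (Nat.gcd u0 u1) u2 * Nat.gcd (Nat.gcd u0 u2) u3
          * Nat.gcd (Nat.gcd u0 u1) u3) ∧
    0 < (u0 * Nat.gcd (Nat.gcd u0 u1) u2 * Nat.gcd (Nat.gcd u0 u2) u3
          * Nat.gcd (Nat.gcd u0 u1) u3)
        / (Nat.gcd (Nat.gcd (Nat.gcd u0 u1) u2) u3 * Nat.gcd u0 u1 * Nat.gcd u0 u2
          * Nat.gcd u0 u3) := by
  have hdvd := Nat.mul_mul_mul_gcd_dvd_of_dvd
    (Nat.gcd_dvd_left u0 u1) (Nat.gcd_dvd_left u0 u2) (Nat.gcd_dvd_left u0 u3)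
  rw [Nat.gcd_gcd_of_dvd (Nat.gcd_dvd_left u0 u1), Nat.gcd_gcd_of_dvd (Nat.gcd_dvd_left u0 u2),
    Nat.gcd_gcd_of_dvd (Nat.gcd_dvd_left u0 u1),
    Nat.gcd_gcd_of_dvd ((Nat.gcd_dvd_left _ u2).trans (Nat.gcd_dvd_left u0 u1)),
    mul_comm, ← mul_assoc, ← mul_assoc] at hdvd
  have hpos : 0 < u0 * Nat.gcd (Nat.gcd u0 u1) u2 * Nat.gcd (Nat.gcd u0 u2) u3
      * Nat.gcd (Nat.gcd u0 u1) u3 := by positivity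
  exact ⟨hdvd, Nat.div_pos (Nat.le_of_dvd hpos hdvd) (Nat.pos_of_dvd_of_pos hdvd hpos)⟩

theorem orlik_m0_integral (u0 u1 u2 u3 : ℕ)
    (h0 : 0 < u0) (h1 : 0 < u1) (h2 : 0 < u2) (h3 : 0 < u3) :
    (Nat.gcd (Nat.gcd (Nat.gcd u0 u1) u2) u3 * Nat.gcd u0 u1 * Nat.gcd u0 u2 * Nat.gcd u0 u3)
      ∣ (u0 * Nat.gcd (Nat.gcd u0 u1) u2 * Nat.gcd (Nat.gcd u0 u2) u3
          * Nat.gcd (Nat.gcd u0 u1) u3) ∧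
    0 < (u0 * Nat.gcd (Nat.gcd u0 u1) u2 * Nat.gcd (Nat.gcd u0 u2) u3
          * Nat.gcd (Nat.gcd u0 u1) u3)
        / (Nat.gcd (Nat.gcd (Nat.gcd u0 u1) u2) u3 * Nat.gcd u0 u1 * Nat.gcd u0 u2
          * Nat.gcd u0 u3) :=
  orlik_m0_integral_general u0 u1 u2 u3 h0
end
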